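/- arXiv:1109.0364 — 2 statements merged into one kernel-verified Lean document; each statement's English description precedes it below -/
import Mathlib

section
/- If S = ρ ∘ d, where d is a metric on Y and ρ : ℝ≥0 → ℝ≥0 is continuous, strictly increasing, and satisfies ρ(0) = 0, then the topology σ induced by the pseudo-metrics d^(z)(y,ỹ) := |S(z,y) − S(z,ỹ)| coincides with the metric topology induced by d. -/
/-!
Each `y ↦ ρ (d z y)` is continuous for the metric topology, so `σ` is coarser. Conversely the
single map `y ↦ ρ (d x y)` already generates the metric neighbourhoods of `x`: since `ρ` is
strictly increasing, `ρ (d x y) < ρ ε` forces `d x y < ε`.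
-/

open Filter Topology Set
open scoped NNReal

theorem StrictMono.comap_nhds_bot_le {α β : Type*} [LinearOrder α] [OrderBot α]
    [TopologicalSpace α] [OrderTopology α] [Nontrivial α] [LinearOrder β] [TopologicalSpace β]
    [OrderTopology β] {f : α → β} (hf : StrictMono f) : comap f (𝓝 (f ⊥)) ≤ 𝓝 ⊥ :=
  nhds_bot_basis.ge_iff.mpr fun a ha =>
    mem_comap.mpr ⟨Iio (f a), Iio_mem_nhds (hf ha), fun _ hx => hf.lt_iff_lt.mp hx⟩

theorem comap_nndist_nhds_zero {Y : Type*} [PseudoMetricSpace Y] (x : Y) :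
    comap (nndist x) (𝓝 0) = 𝓝 x := by
  rw [NNReal.isEmbedding_coe.isInducing.nhds_eq_comap, comap_comap, NNReal.coe_zero,
    ← nhds_comap_dist x]
  simp only [Function.comp_def, coe_nndist, dist_comm]

theorem sigma_topology_eq_metric_general {Y : Type*} [MetricSpace Y]
    (ρ : ℝ≥0 → ℝ≥0) (hcont : Continuous ρ) (hmono : StrictMono ρ) :
    (⨅ z : Y, TopologicalSpace.induced (fun y => ρ (nndist z y)) inferInstance)
      = (inferInstance : TopologicalSpace Y) := by
  refine le_antisymm (le_of_nhds_le_nhds fun x => ?_)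
    (le_iInf fun z => continuous_iff_le_induced.mp (by fun_prop))
  calc @nhds Y (⨅ z : Y, TopologicalSpace.induced (fun y => ρ (nndist z y)) inferInstance) x
      ≤ @nhds Y (TopologicalSpace.induced (ρ ∘ nndist x) inferInstance) x :=
        nhds_mono (iInf_le _ x)
    _ = comap (nndist x) (comap ρ (𝓝 (ρ ⊥))) := by
        rw [nhds_induced, comap_comap, Function.comp_apply, nndist_self, bot_eq_zero']
    _ ≤ comap (nndist x) (𝓝 ⊥) := comap_mono hmono.comap_nhds_bot_le
    _ = 𝓝 x := comap_nndist_nhds_zero x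

/-- If `S = ρ ∘ d` with `d` a metric on `Y` and `ρ : ℝ≥0 → ℝ≥0` continuous,
strictly increasing and `ρ 0 = 0`, then the topology induced by the pseudo-metrics
`d^(z)(y,ỹ) = |S(z,y) − S(z,ỹ)|` (the initial topology of the maps `y ↦ S z y = ρ (d z y)`)
coincides with the metric topology of `d`. -/
theorem sigma_topology_eq_metric {Y : Type*} [MetricSpace Y]
    (ρ : ℝ≥0 → ℝ≥0) (hcont : Continuous ρ) (hmono : StrictMono ρ) (hρ0 : ρ 0 = 0) :
    (⨅ z : Y, TopologicalSpace.induced (fun y => ρ (nndist z y)) inferInstance)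
      = (inferInstance : TopologicalSpace Y) :=
  sigma_topology_eq_metric_general ρ hcont hmono
end

section
/- Suppose F^(l) → F with respect to τ (i.e., d_{K,L}(F^(l),F) → 0 on sequentially compact sets K, L), x^(l) → x in τ, y^(l) → y in σ, F ∈ F(τ). Then lim_l S(F^(l)(x), y^(l)) = S(F(x), y) and S(F(x),y) ≤ liminf_l S(F^(l)(x^(l)), y^(l)). -/
/-!
The sets `{x} ∪ {x⁽ˡ⁾}` and `{y} ∪ {y⁽ˡ⁾}` are sequentially compact for `τ` and `σ` (each is the
continuous image of the one-point compactification of `ℕ`), so `d_{K,L}(F⁽ˡ⁾, F) → 0` on them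
gives `S(F⁽ˡ⁾(uₗ), vₗ) − S(F(uₗ), vₗ) → 0` for any sequences `uₗ`, `vₗ` drawn from these sets.
With `uₗ = x`, the first claim follows from `S(F(x), y⁽ˡ⁾) → S(F(x), y)`; with `uₗ = x⁽ˡ⁾`, the
second follows from the lower semicontinuity of `F`, since a liminf does not change under a
perturbation tending to `0`.
-/

open Filter Topology
open scoped ENNReal

/-- Convergence of a sequence in `Y` with respect to the topology `σ` induced by the
pseudo-metrics `d^(z)(y,ỹ) = |S(z,y) − S(z,ỹ)|`: `y^(l) → p` iff `S(z, y^(l)) → S(z,p)`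
for every `z ∈ Y`. -/
def SigmaTendsto {Y : Type*} (S : Y → Y → ℝ) (y : ℕ → Y) (p : Y) : Prop :=
  ∀ z : Y, Tendsto (fun l => S z (y l)) atTop (nhds (S z p))

/-- Sequential compactness of a subset of `Y` with respect to the topology `σ`. -/
def SeqCompactSigma {Y : Type*} (S : Y → Y → ℝ) (L : Set Y) : Prop :=
  ∀ y : ℕ → Y, (∀ l, y l ∈ L) →
    ∃ p ∈ L, ∃ φ : ℕ → ℕ, StrictMono φ ∧ SigmaTendsto S (fun l => y (φ l)) p

/-- Sequential lower semi-continuity of `(x,y) ↦ S(F(x),y)` with respect to `τ × σ`. -/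
def SeqLSCop {X Y : Type*} [TopologicalSpace X] (S : Y → Y → ℝ) (F : X → Y) : Prop :=
  ∀ (x : ℕ → X) (x₀ : X) (y : ℕ → Y) (y₀ : Y),
    Tendsto x atTop (nhds x₀) → SigmaTendsto S y y₀ →
      S (F x₀) y₀ ≤ liminf (fun l => S (F (x l)) (y l)) atTop

/-- The pseudo-metric `d_{K,L}(F,G) = sup {|S(F(x),z) − S(G(x),z)| : x ∈ K, z ∈ L}`
(with values in `[0,∞]`). -/
noncomputable def dKL {X Y : Type*} (S : Y → Y → ℝ) (K : Set X) (L : Set Y)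
    (F G : X → Y) : ℝ≥0∞ :=
  ⨆ x ∈ K, ⨆ z ∈ L, ENNReal.ofReal |S (F x) z - S (G x) z|

/-- Convergence of operators `F^(l) → F` with respect to `τ`: `d_{K,L}(F^(l),F) → 0`
for every sequentially `τ`-compact `K ⊆ X` and sequentially `σ`-compact `L ⊆ Y`. -/
def OpTendsto {X Y : Type*} [TopologicalSpace X] (S : Y → Y → ℝ)
    (F' : ℕ → X → Y) (F : X → Y) : Prop :=
  ∀ (K : Set X) (L : Set Y), IsSeqCompact K → SeqCompactSigma S L →
    Tendsto (fun l => dKL S K L (F' l) F) atTop (nhds 0)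

open Set

theorem Filter.Tendsto.isSeqCompact_insert_range {X : Type*} [TopologicalSpace X]
    {f : ℕ → X} {x : X} (hf : Tendsto f atTop (𝓝 x)) : IsSeqCompact (insert x (range f)) := by
  let g : C(OnePoint ℕ, X) := OnePoint.continuousMapMkNat f x hf
  have hg : range g = insert x (range f) := by
    ext p
    simp [g, OnePoint.continuousMapMkNat, OnePoint.continuousMapMkDiscrete,
      OnePoint.continuousMapMk, OnePoint.exists, eq_comm]
  exact hg ▸ IsSeqCompact.range g.continuous.seqContinuous

/-- The topology `σ` generated by the pseudo-metrics `|S(z, ·) − S(z, ·')|`, i.e. the coarsest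
topology making every `S z` continuous. -/
abbrev sigmaTopology {Y : Type*} (S : Y → Y → ℝ) : TopologicalSpace Y :=
  ⨅ z, TopologicalSpace.induced (S z) inferInstance

theorem sigmaTendsto_iff_tendsto {Y : Type*} {S : Y → Y → ℝ} {y : ℕ → Y} {p : Y} :
    SigmaTendsto S y p ↔ Tendsto y atTop (@nhds Y (sigmaTopology S) p) := by
  rw [sigmaTopology, nhds_iInf, tendsto_iInf]
  simp only [nhds_induced, tendsto_comap_iff, Function.comp_def, SigmaTendsto]

theorem seqCompactSigma_iff_isSeqCompact {Y : Type*} {S : Y → Y → ℝ} {L : Set Y} :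
    SeqCompactSigma S L ↔ @IsSeqCompact Y (sigmaTopology S) L := by
  simp only [SeqCompactSigma, IsSeqCompact, sigmaTendsto_iff_tendsto, Function.comp_def]

theorem SigmaTendsto.seqCompactSigma_insert_range {Y : Type*} {S : Y → Y → ℝ} {y : ℕ → Y}
    {p : Y} (hy : SigmaTendsto S y p) : SeqCompactSigma S (insert p (range y)) :=
  letI := sigmaTopology S
  seqCompactSigma_iff_isSeqCompact.2 (sigmaTendsto_iff_tendsto.1 hy).isSeqCompact_insert_range

theorem Real.sSup_eq_of_forall_sub_mem {A B : Set ℝ} (hAB : ∀ a ∈ A, ∀ ε > 0, a - ε ∈ B)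
    (hBA : ∀ b ∈ B, ∀ ε > 0, b - ε ∈ A) : sSup A = sSup B := by
  have hne : A.Nonempty ↔ B.Nonempty :=
    ⟨fun ⟨a, ha⟩ => ⟨_, hAB a ha 1 one_pos⟩, fun ⟨b, hb⟩ => ⟨_, hBA b hb 1 one_pos⟩⟩
  have hbdd : BddAbove A ↔ BddAbove B :=
    ⟨fun ⟨M, hM⟩ => ⟨M + 1, fun b hb => by linarith [hM (hBA b hb 1 one_pos)]⟩,
      fun ⟨M, hM⟩ => ⟨M + 1, fun a ha => by linarith [hM (hAB a ha 1 one_pos)]⟩⟩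
  by_cases h : A.Nonempty ∧ BddAbove A
  · have h' : B.Nonempty ∧ BddAbove B := ⟨hne.1 h.1, hbdd.1 h.2⟩
    exact le_antisymm
      (csSup_le h.1 fun a ha => le_of_forall_sub_le fun ε hε => le_csSup h'.2 (hAB a ha ε hε))
      (csSup_le h'.1 fun b hb => le_of_forall_sub_le fun ε hε => le_csSup h.2 (hBA b hb ε hε))
  · rw [Real.sSup_def, Real.sSup_def, dif_neg h, dif_neg (by rwa [← hne, ← hbdd])]

/-- An equality of possibly junk values: both sides are `0` when the sequences are unbounded. -/
theorem Filter.liminf_eq_of_tendsto_sub {ι : Type*} {f : Filter ι} {a b : ι → ℝ}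
    (h : Tendsto (fun i => b i - a i) f (𝓝 0)) : liminf a f = liminf b f := by
  have hclose : ∀ ε > 0, ∀ᶠ i in f, |b i - a i| < ε := by
    simpa only [Real.dist_0_eq_abs] using Metric.tendsto_nhds.1 h
  simp only [liminf_eq]
  refine Real.sSup_eq_of_forall_sub_mem ?_ ?_ <;> intro c hc ε hε <;>
    filter_upwards [hc, hclose ε hε] with i hci hi <;> linarith [abs_lt.1 hi]

section dKL

variable {X Y : Type*} {S : Y → Y → ℝ} {K : Set X} {L : Set Y}

theorem ofReal_abs_sub_le_dKL {F G : X → Y} {x : X} {z : Y} (hx : x ∈ K) (hz : z ∈ L) :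
    ENNReal.ofReal |S (F x) z - S (G x) z| ≤ dKL S K L F G :=
  le_iSup₂_of_le x hx (le_iSup₂_of_le (f := fun z _ => ENNReal.ofReal |S (F x) z - S (G x) z|)
    z hz le_rfl)

theorem tendsto_sub_of_dKL_tendsto_zero {ι : Type*} {f : Filter ι} {G : ι → X → Y} {F : X → Y}
    (hd : Tendsto (fun i => dKL S K L (G i) F) f (𝓝 0)) {u : ι → X} {v : ι → Y}
    (hu : ∀ i, u i ∈ K) (hv : ∀ i, v i ∈ L) :
    Tendsto (fun i => S (G i (u i)) (v i) - S (F (u i)) (v i)) f (𝓝 0) := by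
  have h : Tendsto (fun i => ENNReal.ofReal |S (G i (u i)) (v i) - S (F (u i)) (v i)|) f (𝓝 0) :=
    tendsto_of_tendsto_of_tendsto_of_le_of_le tendsto_const_nhds hd (fun _ => zero_le)
      fun i => ofReal_abs_sub_le_dKL (hu i) (hv i)
  rw [← ENNReal.tendsto_toReal_zero_iff] at h
  rw [tendsto_zero_iff_abs_tendsto_zero]
  simpa only [ENNReal.toReal_ofReal (abs_nonneg _), Function.comp_def] using h

end dKL

/-- if `F^(l) → F` with respect to `τ`, `x^(l) → x` in `τ`, `y^(l) → y` in `σ`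
and `F ∈ F(τ)` (i.e. `(x,y) ↦ S(F(x),y)` is sequentially lower semi-continuous), then
`lim_l S(F^(l)(x), y^(l)) = S(F(x),y)` and
`S(F(x),y) ≤ liminf_l S(F^(l)(x^(l)), y^(l))`. -/
theorem seqconv_lemma {X Y : Type*} [TopologicalSpace X] (S : Y → Y → ℝ)
    (F' : ℕ → X → Y) (F : X → Y)
    (hF : SeqLSCop S F) (hop : OpTendsto S F' F)
    (x' : ℕ → X) (x : X) (hx : Tendsto x' atTop (nhds x))
    (y' : ℕ → Y) (y : Y) (hy : SigmaTendsto S y' y) :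
    Tendsto (fun l => S (F' l x) (y' l)) atTop (nhds (S (F x) y)) ∧
      S (F x) y ≤ liminf (fun l => S (F' l (x' l)) (y' l)) atTop := by
  have hd := hop _ _ hx.isSeqCompact_insert_range hy.seqCompactSigma_insert_range
  have hx' : ∀ l, x' l ∈ insert x (range x') := fun l => mem_insert_of_mem _ (mem_range_self l)
  have hy' : ∀ l, y' l ∈ insert y (range y') := fun l => mem_insert_of_mem _ (mem_range_self l)
  constructor
  · have h := tendsto_sub_of_dKL_tendsto_zero hd (fun _ => mem_insert x _) hy'
    simpa using (hy (F x)).add h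
  · rw [← liminf_eq_of_tendsto_sub (tendsto_sub_of_dKL_tendsto_zero hd hx' hy')]
    exact hF x' x y' y hx hy
end
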